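/- arXiv:2401.04859 — 13 statements merged into one kernel-verified Lean document; each statement's English description precedes it below -/
import Mathlib

section
/- Let d ∈ ℕ, let F : ℝ^d × ℝ^d → ℝ^d be continuously differentiable, let y : ℝ → ℝ^d be differentiable on a neighborhood of t₀ with y'(t) = F(y(t), y(t)) there, and set y₀ = y(t₀). Suppose Y : ℝ → ℝ^d is continuous at 0, satisfies Y(0) = y₀, and satisfies the NPRK IMEX Euler equation Y(h) = y₀ + h·F(Y(h), y₀) for all h in a neighborhood of 0. Then Y(h) − y(t₀ + h) = O(h²) as h → 0, i.e., the NPRK IMEX Euler method has local truncation error of order O(h²). -/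
open Filter Topology Asymptotics

/-!
The NPRK IMEX Euler step and the exact solution both agree with the explicit Euler step
`y₀ + h • F (y₀, y₀)` up to `O(h²)`. For the exact solution this is the mean value inequality
applied to `t ↦ y t - (t - t₀) • y' t₀`, whose derivative `y' t - y' t₀` is `O(t - t₀)` because
`y' = F (y, y)` is differentiable at `t₀`. For the numerical solution, `Y h - y₀ = h • F (Y h, y₀)`
is `O(h)`, hence so is `F (Y h, y₀) - F (y₀, y₀)`, and multiplying by `h` gives `O(h²)`.
-/

section

variable {E : Type*} [NormedAddCommGroup E] [NormedSpace ℝ E]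

theorem isBigO_sub_sub_smul_sq_of_hasDerivAt {f f' : ℝ → E} {t₀ : ℝ}
    (hf : ∀ᶠ t in 𝓝 t₀, HasDerivAt f (f' t) t)
    (hf' : (fun t => f' t - f' t₀) =O[𝓝 t₀] fun t => t - t₀) :
    (fun h : ℝ => f (t₀ + h) - f t₀ - h • f' t₀) =O[𝓝 0] fun h => h ^ 2 := by
  obtain ⟨C, hC0, hC⟩ := hf'.exists_nonneg
  obtain ⟨δ, hδ, hnear⟩ := Metric.eventually_nhds_iff_ball.1 (hf.and hC.bound)
  refine IsBigO.of_bound C ?_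
  filter_upwards [Metric.ball_mem_nhds (0 : ℝ) hδ] with h hh
  set s := Metric.closedBall t₀ |h|
  have hsub : s ⊆ Metric.ball t₀ δ := Metric.closedBall_subset_ball (by simpa using hh)
  have hderiv : ∀ t ∈ s,
      HasDerivWithinAt (fun t => f t - (t - t₀) • f' t₀) (f' t - f' t₀) s t := by
    intro t ht
    have := (hnear t (hsub ht)).1.sub (((hasDerivAt_id t).sub_const t₀).smul_const (f' t₀))
    rw [one_smul] at this
    exact this.hasDerivWithinAt
  have hbound : ∀ t ∈ s, ‖f' t - f' t₀‖ ≤ C * |h| := fun t ht =>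
    (hnear t (hsub ht)).2.trans (by gcongr; rw [← dist_eq_norm]; exact Metric.mem_closedBall.1 ht)
  have hmvt := (convex_closedBall _ _).norm_image_sub_le_of_norm_hasDerivWithin_le hderiv hbound
    (Metric.mem_closedBall_self (abs_nonneg h)) (show t₀ + h ∈ s by simp [s])
  calc ‖f (t₀ + h) - f t₀ - h • f' t₀‖
      = ‖(f (t₀ + h) - (t₀ + h - t₀) • f' t₀) - (f t₀ - (t₀ - t₀) • f' t₀)‖ := by
        congr 1; simp only [add_sub_cancel_left, sub_self, zero_smul, sub_zero]; abel
    _ ≤ C * |h| * ‖t₀ + h - t₀‖ := hmvt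
    _ = C * ‖h ^ 2‖ := by rw [add_sub_cancel_left, norm_pow, Real.norm_eq_abs]; ring

theorem isBigO_implicitEuler_sub_explicitEuler {G : E → E} {y₀ : E} {Y : ℝ → E}
    (hG : (fun x => G x - G y₀) =O[𝓝 y₀] fun x => x - y₀)
    (hY : Tendsto Y (𝓝 0) (𝓝 y₀))
    (hstep : ∀ᶠ h in 𝓝 (0 : ℝ), Y h = y₀ + h • G (Y h)) :
    (fun h : ℝ => Y h - y₀ - h • G y₀) =O[𝓝 0] fun h => h ^ 2 := by
  have hGY : (fun h => G (Y h) - G y₀) =O[𝓝 0] fun h => Y h - y₀ := hG.comp_tendsto hY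
  have hGY_bdd : (fun h => G (Y h)) =O[𝓝 0] fun _ => (1 : ℝ) := by
    have := (hGY.trans_tendsto (by simpa using hY.sub_const y₀)).isBigO_one ℝ
    simpa using this.add (isBigO_const_one ℝ (G y₀) _)
  have hY_lin : (fun h => Y h - y₀) =O[𝓝 0] fun h : ℝ => h := by
    refine ((isBigO_refl (fun h : ℝ => h) _).smul hGY_bdd).congr' ?_ (by simp)
    filter_upwards [hstep] with h hh
    exact (sub_eq_of_eq_add' hh).symm
  refine ((isBigO_refl (fun h : ℝ => h) _).smul (hGY.trans hY_lin)).congr' ?_ (by simp [sq])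
  filter_upwards [hstep] with h hh
  rw [sub_eq_of_eq_add' hh, smul_sub]

end

/-- The NPRK IMEX Euler method `Y(h) = y₀ + h·F(Y(h), y₀)` has local truncation error
of order `O(h²)` for the nonlinearly partitioned IVP `y' = F(y, y)`. -/
theorem nprk_imex_euler_local_truncation_error
    (d : ℕ) (F : (Fin d → ℝ) × (Fin d → ℝ) → (Fin d → ℝ))
    (hF : ContDiff ℝ 1 F)
    (t₀ : ℝ) (y : ℝ → Fin d → ℝ)
    (hy : ∀ᶠ t in 𝓝 t₀, HasDerivAt y (F (y t, y t)) t)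
    (Y : ℝ → Fin d → ℝ)
    (hYc : ContinuousAt Y 0)
    (hY0 : Y 0 = y t₀)
    (hY : ∀ᶠ h in 𝓝 (0 : ℝ), Y h = y t₀ + h • F (Y h, y t₀)) :
    (fun h : ℝ => Y h - y (t₀ + h)) =O[𝓝 (0 : ℝ)] fun h : ℝ => h ^ 2 := by
  have hFd : Differentiable ℝ F := hF.differentiable one_ne_zero
  have hyd : DifferentiableAt ℝ y t₀ := hy.self_of_nhds.differentiableAt
  have himplicit : (fun h : ℝ => Y h - y t₀ - h • F (y t₀, y t₀)) =O[𝓝 0] fun h => h ^ 2 := by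
    refine isBigO_implicitEuler_sub_explicitEuler (G := fun x => F (x, y t₀)) ?_ ?_ hY
    · exact ((hFd _).comp _ (differentiableAt_id.prodMk (differentiableAt_const _))).isBigO_sub
    · simpa [ContinuousAt, hY0] using hYc
  have hexact : (fun h : ℝ => y (t₀ + h) - y t₀ - h • F (y t₀, y t₀)) =O[𝓝 0] fun h => h ^ 2 :=
    isBigO_sub_sub_smul_sq_of_hasDerivAt hy ((hFd _).comp t₀ (hyd.prodMk hyd)).isBigO_sub
  exact (himplicit.sub hexact).congr_left fun h => by abel
end

section
/- The NPRK IMEX Euler stability function R(z₁,z₂) = (1 + z₂)/(1 − z₁) is L-stable in the stiff z₁ limit and stable in the coupled stiff z₂ limit. Precisely: (i) for every fixed z₂ ∈ ℂ, (1 + z₂)/(1 − z₁) tends to 0 as |z₁| → ∞; (ii) for every ε ∈ ℂ, (1 + εz₁)/(1 − z₁) tends to −ε as |z₁| → ∞; consequently β_∞(ε) := lim_{|z₁|→∞} R(z₁, εz₁) = −ε satisfies |β_∞(ε)| ≤ 1 whenever |ε| ≤ 1. -/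
open Filter Topology Bornology

section

variable {𝕜 : Type*} [NormedField 𝕜]

theorem tendsto_div_const_sub_cobounded (c a : 𝕜) :
    Tendsto (fun z => c / (a - z)) (cobounded 𝕜) (𝓝 0) := by
  simpa [div_eq_mul_inv] using
    (tendsto_inv₀_cobounded.comp (tendsto_const_sub_cobounded a)).const_mul c

theorem one_add_mul_div_one_sub {z : 𝕜} (ε : 𝕜) (hz : z ≠ 1) :
    (1 + ε * z) / (1 - z) = (1 + ε) / (1 - z) - ε := by
  have : (1 : 𝕜) - z ≠ 0 := sub_ne_zero.2 hz.symm
  field_simp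
  ring

theorem tendsto_one_add_mul_div_one_sub_cobounded (ε : 𝕜) :
    Tendsto (fun z => (1 + ε * z) / (1 - z)) (cobounded 𝕜) (𝓝 (-ε)) := by
  have h := (tendsto_div_const_sub_cobounded (1 + ε) 1).sub_const ε
  rw [zero_sub] at h
  refine h.congr' ?_
  filter_upwards [eventually_ne_cobounded 1] with z hz
  exact (one_add_mul_div_one_sub ε hz).symm

end

/-- The NPRK IMEX Euler stability function `R(z₁,z₂) = (1 + z₂)/(1 − z₁)` is
L-stable in the stiff `z₁` limit and stable in the coupled stiff `z₂` limit. -/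
theorem nprk_imex_euler_L_stable_and_coupled_stable :
    (∀ z₂ : ℂ, Filter.Tendsto (fun z₁ : ℂ => (1 + z₂) / (1 - z₁))
      (Filter.comap (fun z : ℂ => ‖z‖) Filter.atTop) (𝓝 0)) ∧
    (∀ ε : ℂ, Filter.Tendsto (fun z₁ : ℂ => (1 + ε * z₁) / (1 - z₁))
      (Filter.comap (fun z : ℂ => ‖z‖) Filter.atTop) (𝓝 (-ε))) ∧
    (∀ ε : ℂ, ‖ε‖ ≤ 1 → ‖-ε‖ ≤ 1) := by
  rw [comap_norm_atTop]
  exact ⟨fun z₂ => tendsto_div_const_sub_cobounded (1 + z₂) 1,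
    tendsto_one_add_mul_div_one_sub_cobounded, fun ε hε => (norm_neg ε).trans_le hε⟩
end

section
/- Let z₁, z₂ ∈ ℂ with z₁ ≠ 2, and let y_n, Y₂, y_{n+1} ∈ ℂ satisfy Y₂ = y_n + (1/2)(z₁Y₂ + z₂y_n) and y_{n+1} = y_n + (z₁ + z₂)Y₂ (the IMEX-NPRK2[31] midpoint method applied to the partitioned Dahlquist equation). Then y_{n+1} = R(z₁,z₂)·y_n with stability function R(z₁,z₂) = (z₁(z₂ + 1) + 1 + (z₂ + 1)²)/(2 − z₁). -/
/-- The stability function of the IMEX-NPRK2[31] midpoint method on the partitioned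
Dahlquist equation is `R(z₁,z₂) = (z₁(z₂ + 1) + 1 + (z₂ + 1)²)/(2 − z₁)`. -/
theorem nprk2_31_midpoint_stability_function
    (z₁ z₂ yn Y₂ yn1 : ℂ) (hz₁ : z₁ ≠ 2)
    (hstage : Y₂ = yn + (1 / 2) * (z₁ * Y₂ + z₂ * yn))
    (hout : yn1 = yn + (z₁ + z₂) * Y₂) :
    yn1 = ((z₁ * (z₂ + 1) + 1 + (z₂ + 1) ^ 2) / (2 - z₁)) * yn := by
  have hstage_solved : (2 - z₁) * Y₂ = (2 + z₂) * yn := by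
    linear_combination 2 * hstage
  rw [div_mul_eq_mul_div, eq_div_iff (sub_ne_zero.mpr hz₁.symm)]
  linear_combination (2 - z₁) * hout + (z₁ + z₂) * hstage_solved
end

section
/- Let R(z₁,z₂) = (z₁(z₂ + 1) + 1 + (z₂ + 1)²)/(2 − z₁), the stability function of the IMEX-NPRK2[31] midpoint method. For every fixed z₂ ∈ ℂ, R(z₁,z₂) tends to −(z₂ + 1) as |z₁| → ∞; consequently the modulus of the stiff-z₁ limit is at most 1 if and only if |z₂ + 1| ≤ 1, so the method is only conditionally stable in the stiff z₁ limit. -/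
open Filter Topology

open Bornology

/- Dividing numerator and denominator by `z` turns the quotient into a function of `z⁻¹` that is
continuous at `0`, and `z⁻¹ → 0` as `‖z‖ → ∞`. -/
theorem tendsto_affine_div_affine_cobounded {𝕜 : Type*} [NormedField 𝕜] (a b d : 𝕜) {c : 𝕜}
    (hc : c ≠ 0) :
    Tendsto (fun z : 𝕜 => (a * z + b) / (c * z + d)) (cobounded 𝕜) (𝓝 (a / c)) := by
  have hcont : ContinuousAt (fun w : 𝕜 => (a + b * w) / (c + d * w)) 0 :=
    ContinuousAt.div (by fun_prop) (by fun_prop) (by simpa using hc)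
  have hlim := hcont.tendsto.comp tendsto_inv₀_cobounded
  simp only [mul_zero, add_zero] at hlim
  refine hlim.congr' ?_
  filter_upwards [eventually_ne_cobounded (0 : 𝕜)] with z (hz : z ≠ 0)
  rw [Function.comp_apply, ← mul_div_mul_right (a + b * z⁻¹) _ hz]
  congr 1 <;> field_simp

/-- For the IMEX-NPRK2[31] midpoint stability function
`R(z₁,z₂) = (z₁(z₂ + 1) + 1 + (z₂ + 1)²)/(2 − z₁)`, the stiff-`z₁` limit is `−(z₂ + 1)`;
its modulus is at most 1 iff `|z₂ + 1| ≤ 1`, i.e. the method is only conditionally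
stable in the stiff `z₁` limit. -/
theorem nprk2_31_midpoint_conditional_stiff_stability (z₂ : ℂ) :
    Filter.Tendsto (fun z₁ : ℂ => (z₁ * (z₂ + 1) + 1 + (z₂ + 1) ^ 2) / (2 - z₁))
      (Filter.comap (fun z : ℂ => ‖z‖) Filter.atTop) (𝓝 (-(z₂ + 1))) ∧
    (‖-(z₂ + 1)‖ ≤ 1 ↔ ‖z₂ + 1‖ ≤ 1) := by
  refine ⟨?_, by rw [norm_neg]⟩
  have hlim := tendsto_affine_div_affine_cobounded (z₂ + 1) (1 + (z₂ + 1) ^ 2) 2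
    (neg_ne_zero.2 one_ne_zero)
  rw [div_neg, div_one] at hlim
  rw [comap_norm_atTop]
  convert hlim using 2 with z₁
  ring
end

section
/- Let z₁, z₂ ∈ ℂ with z₁ ≠ 2 and z₂ ≠ 2, and let y_n, Y₂, Y₃, y_{n+1} ∈ ℂ satisfy Y₂ = y_n + (1/2)(z₁Y₂ + z₂y_n), Y₃ = y_n + (1/2)(z₁Y₂ + z₂Y₃), and y_{n+1} = y_n + (z₁Y₂ + z₂Y₃) (the implicit-implicit NPRK Midpoint method applied to the partitioned Dahlquist equation). Then y_{n+1} = R(z₁,z₂)·y_n with the separable stability function R(z₁,z₂) = ((z₁ + 2)/(z₁ − 2))·((z₂ + 2)/(z₂ − 2)). -/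
/-!
Clearing the factor `1/2`, the `Y₂` stage reads `(2 - z₁) Y₂ = (2 + z₂) yₙ`. The `Y₃` stage
says `z₁ Y₂ + z₂ Y₃ = 2 (Y₃ - yₙ)`, so the update is `yₙ₊₁ = 2 Y₃ - yₙ`, and eliminating `Y₃`
together with the `Y₂` stage gives `(2 - z₂) yₙ₊₁ = (2 + z₁) Y₂`. Chaining the two relations,
`R = (2 + z₁)(2 + z₂) / ((2 - z₁)(2 - z₂))`, which is the stated product (both signs flip).
-/

section NPRKMidpoint

variable {K : Type*} [Field K] [NeZero (2 : K)] {z₁ z₂ yn Y₂ Y₃ yn1 : K}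

theorem nprkMidpoint_stage2_eq (hstage2 : Y₂ = yn + (1 / 2) * (z₁ * Y₂ + z₂ * yn)) :
    (2 - z₁) * Y₂ = (2 + z₂) * yn := by
  field_simp at hstage2
  linear_combination hstage2

theorem nprkMidpoint_output_eq (hY₂ : (2 - z₁) * Y₂ = (2 + z₂) * yn)
    (hstage3 : Y₃ = yn + (1 / 2) * (z₁ * Y₂ + z₂ * Y₃))
    (hout : yn1 = yn + (z₁ * Y₂ + z₂ * Y₃)) :
    (2 - z₂) * yn1 = (2 + z₁) * Y₂ := by
  field_simp at hstage3
  linear_combination (2 - z₂) * hout + z₂ * hstage3 - hY₂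

end NPRKMidpoint

/-- The IMIM NPRK Midpoint method applied to the partitioned Dahlquist equation has the
separable stability function `R(z₁,z₂) = ((z₁ + 2)/(z₁ − 2))·((z₂ + 2)/(z₂ − 2))`. -/
theorem imim_nprk_midpoint_stability_function
    (z₁ z₂ yn Y₂ Y₃ yn1 : ℂ) (hz₁ : z₁ ≠ 2) (hz₂ : z₂ ≠ 2)
    (hstage2 : Y₂ = yn + (1 / 2) * (z₁ * Y₂ + z₂ * yn))
    (hstage3 : Y₃ = yn + (1 / 2) * (z₁ * Y₂ + z₂ * Y₃))
    (hout : yn1 = yn + (z₁ * Y₂ + z₂ * Y₃)) :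
    yn1 = (((z₁ + 2) / (z₁ - 2)) * ((z₂ + 2) / (z₂ - 2))) * yn := by
  have h₁ : z₁ - 2 ≠ 0 := sub_ne_zero.mpr hz₁
  have h₂ : z₂ - 2 ≠ 0 := sub_ne_zero.mpr hz₂
  have hY₂ := nprkMidpoint_stage2_eq hstage2
  have hyn1 := nprkMidpoint_output_eq hY₂ hstage3 hout
  field_simp
  linear_combination (2 - z₁) * hyn1 + (2 + z₁) * hY₂
end

section
/- Let z₁, z₂ ∈ ℂ with z₁ ≠ 2 and z₂ ≠ 2, and let y_n, Y₂, Y₃, y_{n+1} ∈ ℂ satisfy Y₂ = y_n + (1/2)(z₁Y₂ + z₂y_n), Y₃ = y_n + (1/2)(z₁Y₂ + z₂y_n) + (1/2)(z₁Y₂ + z₂Y₃), and y_{n+1} = y_n + (1/2)(z₁Y₂ + z₂y_n) + (1/2)(z₁Y₂ + z₂Y₃) (the implicit-implicit NPRK Midpoint/Crank–Nicolson method applied to the partitioned Dahlquist equation). Then y_{n+1} = R(z₁,z₂)·y_n with the separable stability function R(z₁,z₂) = ((z₁ + 2)/(z₁ − 2))·((z₂ + 2)/(z₂ − 2)). -/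
/-! Both implicit stages are trapezoidal steps of the form `y' = y + (a y + b y') / 2`, each
multiplying by `(2 + a) / (2 - b)`: stage 2 goes from `yₙ` to `Y₂` with `(a, b) = (z₂, z₁)`,
stage 3 from `Y₂` to `Y₃ = yₙ₊₁` with `(a, b) = (z₁, z₂)`. The product of the two factors
regroups into the two Crank–Nicolson factors `(z + 2) / (z - 2)`. -/

theorem eq_div_mul_of_trapezoidal_step {K : Type*} [Field K] [NeZero (2 : K)] {a b y y' : K}
    (hb : b ≠ 2) (h : y' = y + 1 / 2 * (a * y + b * y')) : y' = (2 + a) / (2 - b) * y := by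
  have hb' : 2 - b ≠ 0 := sub_ne_zero.mpr hb.symm
  rw [div_mul_eq_mul_div, eq_div_iff hb']
  field_simp at h
  linear_combination h

/-- The IMIM NPRK Midpoint/Crank–Nicolson method applied to the partitioned Dahlquist
equation has the separable stability function
`R(z₁,z₂) = ((z₁ + 2)/(z₁ − 2))·((z₂ + 2)/(z₂ − 2))`. -/
theorem imim_nprk_midpoint_crank_nicolson_stability_function
    (z₁ z₂ yn Y₂ Y₃ yn1 : ℂ) (hz₁ : z₁ ≠ 2) (hz₂ : z₂ ≠ 2)
    (hstage2 : Y₂ = yn + (1 / 2) * (z₁ * Y₂ + z₂ * yn))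
    (hstage3 : Y₃ = yn + (1 / 2) * (z₁ * Y₂ + z₂ * yn) + (1 / 2) * (z₁ * Y₂ + z₂ * Y₃))
    (hout : yn1 = yn + (1 / 2) * (z₁ * Y₂ + z₂ * yn) + (1 / 2) * (z₁ * Y₂ + z₂ * Y₃)) :
    yn1 = (((z₁ + 2) / (z₁ - 2)) * ((z₂ + 2) / (z₂ - 2))) * yn := by
  have hY₂ : Y₂ = (2 + z₂) / (2 - z₁) * yn :=
    eq_div_mul_of_trapezoidal_step hz₁ (by linear_combination hstage2)
  have hY₃ : Y₃ = (2 + z₁) / (2 - z₂) * Y₂ :=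
    eq_div_mul_of_trapezoidal_step hz₂ (by linear_combination hstage3 - hstage2)
  rw [hout, ← hstage3, hY₃, hY₂, ← neg_sub z₁ 2, ← neg_sub z₂ 2, div_neg, div_neg]
  ring
end

section
/- For every z ∈ ℂ with Re(z) ≤ 0 one has |(z + 2)/(z − 2)| ≤ 1; consequently, for all z₁, z₂ ∈ ℂ with Re(z₁) ≤ 0 and Re(z₂) ≤ 0, the stability function R(z₁,z₂) = ((z₁ + 2)/(z₁ − 2))·((z₂ + 2)/(z₂ − 2)) of the second-order IMIM NPRK methods satisfies |R(z₁,z₂)| ≤ 1. Hence these IMIM NPRK methods are A-stable in the sense that their stability region contains ℂ⁻ × ℂ⁻. -/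
namespace Complex

theorem norm_add_ofReal_le_norm_sub_ofReal {z : ℂ} {a : ℝ} (hz : z.re ≤ 0) (ha : 0 ≤ a) :
    ‖z + a‖ ≤ ‖z - a‖ := by
  rw [← sq_le_sq₀ (norm_nonneg _) (norm_nonneg _), Complex.sq_norm, Complex.sq_norm, normSq_apply, normSq_apply]
  -- the two sides differ by `4 a re z`
  simp only [add_re, sub_re, add_im, sub_im, ofReal_re, ofReal_im, add_zero, sub_zero]
  nlinarith

theorem norm_add_ofReal_div_sub_ofReal_le_one {z : ℂ} {a : ℝ} (hz : z.re ≤ 0) (ha : 0 ≤ a) :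
    ‖(z + a) / (z - a)‖ ≤ 1 := by
  rw [norm_div]
  exact div_le_one_of_le₀ (norm_add_ofReal_le_norm_sub_ofReal hz ha) (norm_nonneg _)

theorem norm_add_two_div_sub_two_le_one {z : ℂ} (hz : z.re ≤ 0) : ‖(z + 2) / (z - 2)‖ ≤ 1 := by
  exact_mod_cast norm_add_ofReal_div_sub_ofReal_le_one (a := 2) hz zero_le_two

end Complex

/-- `|(z + 2)/(z − 2)| ≤ 1` on the closed left half-plane; consequently the separable
stability function `R(z₁,z₂) = ((z₁+2)/(z₁−2))·((z₂+2)/(z₂−2))` of the second-order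
IMIM NPRK methods satisfies `|R(z₁,z₂)| ≤ 1` on `ℂ⁻ × ℂ⁻`, i.e. the methods are
A-stable. -/
theorem imim_nprk_second_order_A_stable :
    (∀ z : ℂ, z.re ≤ 0 → ‖(z + 2) / (z - 2)‖ ≤ 1) ∧
    (∀ z₁ z₂ : ℂ, z₁.re ≤ 0 → z₂.re ≤ 0 →
      ‖((z₁ + 2) / (z₁ - 2)) * ((z₂ + 2) / (z₂ - 2))‖ ≤ 1) := by
  refine ⟨fun z hz => Complex.norm_add_two_div_sub_two_le_one hz, fun z₁ z₂ h₁ h₂ => ?_⟩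
  rw [norm_mul]
  exact mul_le_one₀ (Complex.norm_add_two_div_sub_two_le_one h₁) (norm_nonneg _)
    (Complex.norm_add_two_div_sub_two_le_one h₂)
end

section
/- Let b ∈ ℝ with b ≠ 0 and define c₃(b) = −32b² − 8/b² + 80b + 40/b − 80. Then c₃(b) = 0 if and only if b = 1/2 or b = 1. (Hence the stability function of the one-parameter family of second-order IMIM NPRK methods is separable precisely for the parameter values b₂₃ ∈ {1/2, 1}.) -/
/-! Clearing denominators gives `b² · c₃(b) = -8 (2b - 1)(b - 1)(2b² - 2b + 1)`, and the quadratic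
factor `2b² - 2b + 1 = b² + (b - 1)²` has no real root. -/

lemma sq_mul_separabilityConstant_eq {K : Type*} [Field K] {b : K} (hb : b ≠ 0) :
    b ^ 2 * (-32 * b ^ 2 - 8 / b ^ 2 + 80 * b + 40 / b - 80) =
      -8 * ((2 * b - 1) * (b - 1) * (2 * b ^ 2 - 2 * b + 1)) := by
  field_simp
  ring

lemma two_mul_sq_sub_two_mul_add_one_pos {K : Type*} [Field K] [LinearOrder K]
    [IsStrictOrderedRing K] (b : K) : 0 < 2 * b ^ 2 - 2 * b + 1 := by
  nlinarith [sq_nonneg (2 * b - 1)]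

/-- For `b ≠ 0`, the separability constant `c₃(b) = −32b² − 8/b² + 80b + 40/b − 80`
of the one-parameter family of second-order IMIM NPRK methods vanishes iff
`b = 1/2` or `b = 1`. -/
theorem imim_nprk_separability_constant_zero_iff
    (b : ℝ) (hb : b ≠ 0) :
    -32 * b ^ 2 - 8 / b ^ 2 + 80 * b + 40 / b - 80 = 0 ↔ b = 1 / 2 ∨ b = 1 := by
  have hq := (two_mul_sq_sub_two_mul_add_one_pos b).ne'
  rw [← mul_right_inj' (pow_ne_zero 2 hb), sq_mul_separabilityConstant_eq hb, mul_zero,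
    mul_eq_zero_iff_left (by norm_num), mul_eq_zero_iff_right hq, mul_eq_zero, sub_eq_zero,
    sub_eq_zero]
  exact or_congr_left ⟨fun h ↦ by linarith, fun h ↦ by linarith⟩
end

section
/- Define γ₀ : ℝ \ {1} → ℝ by γ₀(b) = (16b⁴ − 24b³ + 17b² − 6b + 1)/(b − 1)². Then: (i) for b ≠ 1, the derivative γ₀'(b) = 0 if and only if b = 1 − 1/√2 or b = 1 + 1/√2; (ii) γ₀(1 − 1/√2) = 57 − 40√2 and γ₀(1 + 1/√2) = 57 + 40√2; (iii) γ₀ attains its global minimum over ℝ \ {1} at b = 1 − 1/√2, with minimum value 57 − 40√2 ≤ 1. -/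
/-!
With `t = b - 1` the numerator is the perfect square `(4t² + 5t + 2)²`, so
`γ₀(1 + t) = (4t + 5 + 2/t)²`. By AM–GM `|4t + 2/t| ≥ 4√2`, hence `|4t + 5 + 2/t| ≥ 4√2 - 5 > 0`
with equality exactly at `t = -1/√2`; this gives the minimum `(4√2 - 5)² = 57 - 40√2`, shows that
the base never vanishes, and so the critical points are the zeros of `d/dt (4t + 2/t) = 4 - 2/t²`.
-/

open Real

noncomputable def gammaRoot (t : ℝ) : ℝ := 4 * t + 5 + 2 / t

lemma gamma_div_eq_gammaRoot_sq {b : ℝ} (hb : b ≠ 1) :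
    (16 * b ^ 4 - 24 * b ^ 3 + 17 * b ^ 2 - 6 * b + 1) / (b - 1) ^ 2 = gammaRoot (b - 1) ^ 2 := by
  have ht : b - 1 ≠ 0 := sub_ne_zero.mpr hb
  rw [gammaRoot]
  field_simp
  ring

lemma two_sqrt_mul_le_abs_mul_add_div {a c t : ℝ} (ha : 0 ≤ a) (hc : 0 ≤ c) (ht : t ≠ 0) :
    2 * √(a * c) ≤ |a * t + c / t| := by
  have habs : 0 < |t| := abs_pos.mpr ht
  have hsum : |a * t + c / t| = (a * t ^ 2 + c) / |t| := by
    rw [show a * t + c / t = (a * t ^ 2 + c) / t by field_simp, abs_div,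
      abs_of_nonneg (by positivity)]
  rw [hsum, le_div_iff₀ habs, sqrt_mul ha]
  have hsq : (√a * |t| - √c) ^ 2 = a * t ^ 2 + c - 2 * (√a * √c) * |t| := by
    rw [sub_sq, mul_pow, sq_sqrt ha, sq_sqrt hc, sq_abs]
    ring
  linarith [sq_nonneg (√a * |t| - √c)]

lemma four_sqrt_two_le_abs {t : ℝ} (ht : t ≠ 0) : 4 * √2 ≤ |4 * t + 2 / t| := by
  have h := two_sqrt_mul_le_abs_mul_add_div (by norm_num : (0 : ℝ) ≤ 4) zero_le_two ht
  rw [sqrt_mul zero_le_four, show √4 = 2 by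
    rw [show (4 : ℝ) = 2 ^ 2 by norm_num, sqrt_sq zero_le_two]] at h
  linarith

lemma five_le_four_sqrt_two : 5 ≤ 4 * √2 := by
  nlinarith [sq_sqrt (zero_le_two : (0 : ℝ) ≤ 2), sqrt_nonneg 2]

lemma sq_gammaRoot_ge {t : ℝ} (ht : t ≠ 0) : 57 - 40 * √2 ≤ gammaRoot t ^ 2 := by
  have hs := sq_sqrt (zero_le_two : (0 : ℝ) ≤ 2)
  have hroot : 4 * √2 - 5 ≤ |gammaRoot t| := by
    have h := abs_sub_abs_le_abs_sub (4 * t + 2 / t) (-5)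
    rw [show 4 * t + 2 / t - -5 = gammaRoot t by rw [gammaRoot]; ring] at h
    norm_num at h
    linarith [four_sqrt_two_le_abs ht]
  calc 57 - 40 * √2 = (4 * √2 - 5) ^ 2 := by linear_combination -16 * hs
    _ ≤ |gammaRoot t| ^ 2 := pow_le_pow_left₀ (by linarith [five_le_four_sqrt_two]) hroot 2
    _ = gammaRoot t ^ 2 := sq_abs _

lemma gammaRoot_ne_zero {t : ℝ} (ht : t ≠ 0) : gammaRoot t ≠ 0 := by
  have hpos : 0 < 57 - 40 * √2 := by
    nlinarith [sq_sqrt (zero_le_two : (0 : ℝ) ≤ 2), sqrt_nonneg 2]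
  exact pow_ne_zero_iff two_ne_zero |>.mp (by linarith [sq_gammaRoot_ge ht])

lemma gammaRoot_inv_sqrt_two : gammaRoot (1 / √2) = 5 + 4 * √2 := by
  have hs : √2 ≠ 0 := by positivity
  rw [gammaRoot]
  field_simp
  linear_combination (-2 : ℝ) * sq_sqrt (zero_le_two : (0 : ℝ) ≤ 2)

lemma gammaRoot_neg_inv_sqrt_two : gammaRoot (-(1 / √2)) = 5 - 4 * √2 := by
  have hs : √2 ≠ 0 := by positivity
  rw [gammaRoot]
  field_simp
  linear_combination (2 : ℝ) * sq_sqrt (zero_le_two : (0 : ℝ) ≤ 2)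

lemma hasDerivAt_gammaRoot {t : ℝ} (ht : t ≠ 0) : HasDerivAt gammaRoot (4 - 2 / t ^ 2) t := by
  have h := (((hasDerivAt_id t).const_mul 4).add_const 5).add ((hasDerivAt_inv ht).const_mul 2)
  have hfun : gammaRoot = (fun x => 4 * id x + 5) + fun y => 2 * y⁻¹ := by
    ext x
    simp [gammaRoot, div_eq_mul_inv]
  rw [hfun]
  exact h.congr_deriv (by ring)

lemma sq_eq_half_iff {t : ℝ} : t ^ 2 = 1 / 2 ↔ t = 1 / √2 ∨ t = -(1 / √2) := by
  rw [← sq_eq_sq_iff_eq_or_eq_neg, div_pow, sq_sqrt zero_le_two, one_pow]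

lemma hasDerivAt_of_eq_gammaRoot_sq {f : ℝ → ℝ} (hf : ∀ b, b ≠ 1 → f b = gammaRoot (b - 1) ^ 2)
    {b : ℝ} (hb : b ≠ 1) :
    HasDerivAt f (2 * gammaRoot (b - 1) * (4 - 2 / (b - 1) ^ 2)) b := by
  have ht : b - 1 ≠ 0 := sub_ne_zero.mpr hb
  have h := ((hasDerivAt_gammaRoot ht).comp b ((hasDerivAt_id b).sub_const 1)).pow 2
  refine (h.congr_deriv (by simp)).congr_of_eventuallyEq ?_
  filter_upwards [isOpen_ne.mem_nhds hb] with x hx using hf x hx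

/-- For `γ₀(b) = (16b⁴ − 24b³ + 17b² − 6b + 1)/(b − 1)²` (the `θ = 0` value of the
coupled stiff-limit stability function of the three-stage two-solve L-stable
second-order IMEX-NPRK family): (i) for `b ≠ 1` the derivative vanishes exactly at
`b = 1 ∓ 1/√2`; (ii) the critical values are `57 ∓ 40√2`; (iii) the global minimum
over `ℝ \ {1}` is attained at `b = 1 − 1/√2` with value `57 − 40√2 ≤ 1`. -/
theorem imex_nprk2_32_gamma_zero_optimization
    (γ₀ : ℝ → ℝ)
    (hγ : ∀ b : ℝ, γ₀ b = (16 * b ^ 4 - 24 * b ^ 3 + 17 * b ^ 2 - 6 * b + 1) / (b - 1) ^ 2) :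
    (∀ b : ℝ, b ≠ 1 →
      (deriv γ₀ b = 0 ↔ b = 1 - 1 / Real.sqrt 2 ∨ b = 1 + 1 / Real.sqrt 2)) ∧
    (γ₀ (1 - 1 / Real.sqrt 2) = 57 - 40 * Real.sqrt 2 ∧
      γ₀ (1 + 1 / Real.sqrt 2) = 57 + 40 * Real.sqrt 2) ∧
    ((∀ b : ℝ, b ≠ 1 → γ₀ (1 - 1 / Real.sqrt 2) ≤ γ₀ b) ∧
      57 - 40 * Real.sqrt 2 ≤ 1) := by
  have hsq : ∀ b, b ≠ 1 → γ₀ b = gammaRoot (b - 1) ^ 2 := fun b hb =>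
    (hγ b).trans (gamma_div_eq_gammaRoot_sq hb)
  have hs : √2 ^ 2 = 2 := sq_sqrt zero_le_two
  have hinv : 0 < 1 / √2 := by positivity
  have hmin : γ₀ (1 - 1 / √2) = 57 - 40 * √2 := by
    rw [hsq _ (by linarith), show 1 - 1 / √2 - 1 = -(1 / √2) by ring, gammaRoot_neg_inv_sqrt_two]
    linear_combination 16 * hs
  have hmax : γ₀ (1 + 1 / √2) = 57 + 40 * √2 := by
    rw [hsq _ (by linarith), add_sub_cancel_left, gammaRoot_inv_sqrt_two]
    linear_combination 16 * hs
  refine ⟨fun b hb => ?_, ⟨hmin, hmax⟩, fun b hb => ?_, by nlinarith [five_le_four_sqrt_two]⟩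
  · have ht : b - 1 ≠ 0 := sub_ne_zero.mpr hb
    rw [(hasDerivAt_of_eq_gammaRoot_sq hsq hb).deriv, mul_eq_zero, mul_eq_zero,
      or_iff_right two_ne_zero, or_iff_right (gammaRoot_ne_zero ht), sub_eq_zero,
      eq_div_iff (pow_ne_zero 2 ht),
      show 4 * (b - 1) ^ 2 = 2 ↔ (b - 1) ^ 2 = 1 / 2 by constructor <;> intro h <;> linarith,
      sq_eq_half_iff]
    constructor <;> rintro (h | h) <;> [right; left; right; left] <;> linarith
  · rw [hmin, hsq b hb]
    exact sq_gammaRoot_ge (sub_ne_zero.mpr hb)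
end

section
/- For a ∈ ℝ with a ≠ 0 and a ≠ 1/2, define c₀(a) = (a(a(4(a−2)a+9)−6)+2)/((1−2a)²a²) and c₁(a) = (2 − 2a(2(a−2)a+3))/((1−2a)²a²). Then: (i) c₀(a) − c₁(a) = 1 for all such a, i.e., γ(π;a) = 1; (ii) the value at θ = 0, γ₀(a) := c₀(a) + c₁(a) = (4a⁴ − 12a³ + 17a² − 12a + 4)/(a²(1−2a)²), satisfies γ₀(1 + 1/√2) = 57 − 40√2 and γ₀(1 − 1/√2) = 57 + 40√2, and both a = 1 + 1/√2 and a = 1 − 1/√2 are critical points of γ₀. -/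
/-!
Part (i) is the polynomial identity `num c₀ − num c₁ = (1 − 2a)²a²`. For the rest, write
`a = 1 + t`: both `a = 1 ± 1/√2` satisfy `2t² = 1`, and reducing the numerator and the
denominator of `γ₀` modulo `2t² − 1` gives `γ₀(1 + t) = (9 + 8t)/(17 + 24t) = 57 − 80t`,
with `80/√2 = 40√2`. The numerator of `γ₀'` (quotient rule) factors as
`−4a(1 − 2a)(2a² − 3a + 2)(2(a − 1)² − 1)`, so it vanishes at both points.
-/

open Real

namespace IMEXNPRK2

def gammaZeroNum (a : ℝ) : ℝ := 4 * a ^ 4 - 12 * a ^ 3 + 17 * a ^ 2 - 12 * a + 4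

def gammaZeroDen (a : ℝ) : ℝ := a ^ 2 * (1 - 2 * a) ^ 2

lemma hasDerivAt_gammaZeroNum (x : ℝ) :
    HasDerivAt gammaZeroNum (16 * x ^ 3 - 36 * x ^ 2 + 34 * x - 12) x := by
  have h := (((((hasDerivAt_pow 4 x).const_mul (4 : ℝ)).sub
      ((hasDerivAt_pow 3 x).const_mul (12 : ℝ))).add
      ((hasDerivAt_pow 2 x).const_mul (17 : ℝ))).sub
      ((hasDerivAt_id' x).const_mul (12 : ℝ))).add_const (4 : ℝ)
  exact h.congr_deriv (by norm_num; ring)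

lemma hasDerivAt_gammaZeroDen (x : ℝ) :
    HasDerivAt gammaZeroDen (2 * x * (1 - 2 * x) * (1 - 4 * x)) x := by
  have h :=
    ((hasDerivAt_id' x).pow 2).mul ((((hasDerivAt_id' x).const_mul 2).const_sub 1).pow 2)
  exact h.congr_deriv (by norm_num; ring)

lemma hasDerivAt_gammaZero {x : ℝ} (hx : gammaZeroDen x ≠ 0) :
    HasDerivAt (fun a => gammaZeroNum a / gammaZeroDen a)
      (-4 * x * (1 - 2 * x) * (2 * x ^ 2 - 3 * x + 2) * (2 * (x - 1) ^ 2 - 1) /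
        gammaZeroDen x ^ 2) x := by
  refine ((hasDerivAt_gammaZeroNum x).div (hasDerivAt_gammaZeroDen x) hx).congr_deriv ?_
  unfold gammaZeroNum gammaZeroDen
  ring

section OnePlusT

variable {t : ℝ}

lemma gammaZeroNum_one_add (ht : 2 * t ^ 2 = 1) : gammaZeroNum (1 + t) = (9 + 8 * t) / 2 := by
  unfold gammaZeroNum
  linear_combination (2 * t ^ 2 + 2 * t + 7 / 2) * ht

lemma gammaZeroDen_one_add (ht : 2 * t ^ 2 = 1) : gammaZeroDen (1 + t) = (17 + 24 * t) / 2 := by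
  unfold gammaZeroDen
  linear_combination (2 * t ^ 2 + 6 * t + 15 / 2) * ht

lemma gammaZeroDen_one_add_ne_zero (ht : 2 * t ^ 2 = 1) : gammaZeroDen (1 + t) ≠ 0 := by
  rw [gammaZeroDen_one_add ht]
  intro h
  nlinarith

lemma gammaZero_one_add (ht : 2 * t ^ 2 = 1) :
    gammaZeroNum (1 + t) / gammaZeroDen (1 + t) = 57 - 80 * t := by
  rw [div_eq_iff (gammaZeroDen_one_add_ne_zero ht), gammaZeroNum_one_add ht,
    gammaZeroDen_one_add ht]
  linear_combination 480 * ht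

lemma deriv_gammaZero_one_add (ht : 2 * t ^ 2 = 1) :
    deriv (fun a => gammaZeroNum a / gammaZeroDen a) (1 + t) = 0 := by
  rw [(hasDerivAt_gammaZero (gammaZeroDen_one_add_ne_zero ht)).deriv, add_sub_cancel_left, ht]
  simp

end OnePlusT

end IMEXNPRK2

open IMEXNPRK2 in
/-- For the four-stage two-solve L-stable second-order IMEX-NPRK family with parameter
`a = a₂₂₁`: (i) `c₀(a) − c₁(a) = 1`, i.e. `γ(π;a) = 1`; (ii) the `θ = 0` value
`γ₀(a) = c₀(a) + c₁(a) = (4a⁴ − 12a³ + 17a² − 12a + 4)/(a²(1−2a)²)` satisfies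
`γ₀(1 + 1/√2) = 57 − 40√2` and `γ₀(1 − 1/√2) = 57 + 40√2`, and both `a = 1 ± 1/√2`
are critical points of `γ₀`. -/
theorem imex_nprk2_42_gamma_optimization
    (c₀ c₁ γ₀ : ℝ → ℝ)
    (hc₀ : ∀ a : ℝ, c₀ a =
      (a * (a * (4 * (a - 2) * a + 9) - 6) + 2) / ((1 - 2 * a) ^ 2 * a ^ 2))
    (hc₁ : ∀ a : ℝ, c₁ a =
      (2 - 2 * a * (2 * (a - 2) * a + 3)) / ((1 - 2 * a) ^ 2 * a ^ 2))
    (hγ₀ : ∀ a : ℝ, γ₀ a =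
      (4 * a ^ 4 - 12 * a ^ 3 + 17 * a ^ 2 - 12 * a + 4) / (a ^ 2 * (1 - 2 * a) ^ 2)) :
    (∀ a : ℝ, a ≠ 0 → a ≠ 1 / 2 → c₀ a - c₁ a = 1) ∧
    (∀ a : ℝ, a ≠ 0 → a ≠ 1 / 2 → c₀ a + c₁ a = γ₀ a) ∧
    (γ₀ (1 + 1 / Real.sqrt 2) = 57 - 40 * Real.sqrt 2 ∧
      γ₀ (1 - 1 / Real.sqrt 2) = 57 + 40 * Real.sqrt 2) ∧
    (deriv γ₀ (1 + 1 / Real.sqrt 2) = 0 ∧ deriv γ₀ (1 - 1 / Real.sqrt 2) = 0) := by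
  have hγ : γ₀ = fun a => gammaZeroNum a / gammaZeroDen a := funext hγ₀
  have ht : 2 * (1 / √2) ^ 2 = 1 := by rw [div_pow, sq_sqrt zero_le_two]; norm_num
  have ht' : 2 * (-(1 / √2)) ^ 2 = 1 := by rwa [neg_sq]
  have h80 : 80 * (1 / √2) = 40 * √2 := by
    field_simp
    rw [sq_sqrt zero_le_two]
    norm_num
  rw [sub_eq_add_neg 1 (1 / √2)]
  refine ⟨fun a ha0 ha2 => ?_, fun a _ _ => ?_, ⟨?_, ?_⟩, ?_, ?_⟩
  · have hden : (1 - 2 * a) ^ 2 * a ^ 2 ≠ 0 :=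
      mul_ne_zero (pow_ne_zero 2 (by contrapose! ha2; linarith)) (pow_ne_zero 2 ha0)
    rw [hc₀, hc₁, div_sub_div_same, div_eq_one_iff_eq hden]
    ring
  · rw [hc₀, hc₁, hγ₀, ← add_div]
    congr 1 <;> ring
  · exact (hγ₀ _).trans ((gammaZero_one_add ht).trans (by rw [h80]))
  · exact (hγ₀ _).trans ((gammaZero_one_add ht').trans (by rw [mul_neg, h80, sub_neg_eq_add]))
  · rw [hγ]; exact deriv_gammaZero_one_add ht
  · rw [hγ]; exact deriv_gammaZero_one_add ht'
end

section
/- Let s ≥ 1 and let (a_{ijk}) for 1 ≤ i,j,k ≤ s and (b_{ij}) for 1 ≤ i,j ≤ s be real coefficients such that for each stage i: a_{ijk} = 0 whenever j > i or k > i, a_{iik} = 0 for all k ≠ i−1, a_{iji} = 0 for all j ≠ i−1, and at least one of a_{i,i,i−1}, a_{i,i−1,i} is zero. Then there exist ŝ ≥ s and real sequentially-coupled coefficients (ã_{i,j,j−1}) for 2 ≤ j ≤ i ≤ ŝ, (ã_{i,i−1,i}) for 2 ≤ i ≤ ŝ, and (b̃_{i,i−1}) for 2 ≤ i ≤ ŝ,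 such that for every dimension d, every function F : ℝ^d × ℝ^d → ℝ^d, every h ∈ ℝ, every y_n ∈ ℝ^d, and every tuple (Y₁, …, Y_s) with Y₁ = y_n and Y_i = y_n + h[a_{i,i,i−1}F(Y_i,Y_{i−1}) + a_{i,i−1,i}F(Y_{i−1},Y_i) + Σ_{j<i} Σ_{k<i} a_{ijk}F(Y_j,Y_k)] for i = 2,…,s, there exists a tuple (Ỹ₁, …, Ỹ_ŝ) with Ỹ₁ = y_n and Ỹ_i = y_n + h[ã_{i,i,i−1}F(Ỹ_i,Ỹ_{i−1}) + ã_{i,i−1,i}F(Ỹ_{i−1},Ỹ_i) + Σ_{j=2}^{i−1} ã_{i,j,j−1}F(Ỹ_j,Ỹ_{j−1})] for i = 2,…,ŝ, whose output agrees with that of the original method: y_n + h Σ_{i,j} b_{ij}F(Y_i,Y_j) = y_n + h Σ_{i=2}^{ŝ} b̃_{i,i−1}F(Ỹ_i,Ỹ_{i−1}). -/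
/-!
Every stage `Ỹ_p` of the new method is a copy `Y_{σ p}` of a stage of the old one. A copy of
`Y_u` obeys a sequentially-coupled stage equation as soon as every product `F(Y_j, Y_k)` in the
stage equation of `Y_u` has already appeared as a consecutive product `F(Ỹ_q, Ỹ_{q-1})`, except
that the two couplings of `Y_u` with `Y_{u-1}` may be taken implicitly when `Ỹ_{p-1} = Y_{u-1}`;
at most one of them is nonzero, so such a stage still has at most one implicit coupling.

The layout visits the pairs `(j, k)` in `Nat.pair` order, i.e. by increasing `m = max j k`, and
spends five stages `m - 1, m, m - 1, k, j` on each: the first three produce both couplings of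
`Y_m` with `Y_{m-1}` (the middle one implicitly), after which `Y_j` and `Y_k` can be copied
explicitly. Every pair then occurs consecutively, which also makes the output sequentially coupled.
-/

open Finset

namespace Nat

theorem pair_lt_sq_iff {a b n : ℕ} : pair a b < n ^ 2 ↔ a < n ∧ b < n := by
  constructor
  · intro h
    have : max a b ^ 2 < n ^ 2 :=
      (le_add_right _ _).trans_lt ((max_sq_add_min_le_pair a b).trans_lt h)
    have := (Nat.pow_lt_pow_iff_left (by norm_num)).1 this
    omega
  · rintro ⟨ha, hb⟩
    exact (pair_lt_max_add_one_sq a b).trans_le (Nat.pow_le_pow_left (by omega) 2)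

theorem pair_lt_pair_of_max_lt {a b a' b' : ℕ} (h : max a' b' < max a b) :
    pair a' b' < pair a b :=
  (pair_lt_sq_iff.2 ⟨by omega, by omega⟩).trans_le
    ((le_add_right _ _).trans (max_sq_add_min_le_pair a b))

end Nat

theorem Finset.sum_update_smul_of_notMem {ι E : Type*} [DecidableEq ι] [AddCommMonoid E]
    [Module ℝ E] {R : Finset ι} {p : ι} (hp : p ∉ R) (β : ι → ℝ) (c : ℝ) (g : ι → E) :
    ∑ q ∈ R, Function.update β p c q • g q = ∑ q ∈ R, β q • g q :=
  sum_congr rfl fun q hq ↦ by rw [Function.update_of_ne (ne_of_mem_of_not_mem hq hp)]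

namespace NPRK

section Rhs

variable {E : Type*} [AddCommMonoid E] [Module ℝ E]

/-- The increment of stage `u` of the original method, with `G j k` standing for
`F (Y j) (Y k)`; the first stage is `y_n` itself. -/
def stageRhs (a : ℕ → ℕ → ℕ → ℝ) (u : ℕ) (G : ℕ → ℕ → E) : E :=
  if u ≤ 1 then 0 else
    a u u (u - 1) • G u (u - 1) + a u (u - 1) u • G (u - 1) u +
      ∑ j ∈ Icc 1 (u - 1), ∑ k ∈ Icc 1 (u - 1), a u j k • G j k

def seqRhs (σ : ℕ → ℕ) (A : ℕ → ℝ) (Af : ℝ) (p : ℕ) (G : ℕ → ℕ → E) : E :=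
  A p • G (σ p) (σ (p - 1)) + Af • G (σ (p - 1)) (σ p) +
    ∑ q ∈ Icc 2 (p - 1), A q • G (σ q) (σ (q - 1))

end Rhs

def PairOccursBefore (σ : ℕ → ℕ) (p j k : ℕ) : Prop :=
  ∃ q ∈ Icc 2 (p - 1), σ q = j ∧ σ (q - 1) = k

def StageComputable (σ : ℕ → ℕ) (p : ℕ) : Prop :=
  2 ≤ σ p →
    (∀ j ∈ Icc 1 (σ p - 1), ∀ k ∈ Icc 1 (σ p - 1), PairOccursBefore σ p j k) ∧
    (σ (p - 1) = σ p - 1 ∨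
      PairOccursBefore σ p (σ p) (σ p - 1) ∧ PairOccursBefore σ p (σ p - 1) (σ p))

theorem exists_sum_pairs_eq_sum_consecutive {σ : ℕ → ℕ} {R : Finset ℕ} {S : Finset (ℕ × ℕ)}
    (c : ℕ × ℕ → ℝ) (hS : ∀ x ∈ S, ∃ q ∈ R, σ q = x.1 ∧ σ (q - 1) = x.2) :
    ∃ β : ℕ → ℝ, ∀ (E : Type) [AddCommMonoid E] [Module ℝ E] (G : ℕ → ℕ → E),
      ∑ x ∈ S, c x • G x.1 x.2 = ∑ q ∈ R, β q • G (σ q) (σ (q - 1)) := by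
  choose! pos hposR hpos using hS
  refine ⟨fun q ↦ ∑ x ∈ S with pos x = q, c x, fun E _ _ G ↦ ?_⟩
  calc ∑ x ∈ S, c x • G x.1 x.2
      = ∑ x ∈ S, c x • G (σ (pos x)) (σ (pos x - 1)) :=
        sum_congr rfl fun x hx ↦ by rw [(hpos x hx).1, (hpos x hx).2]
    _ = ∑ q ∈ R, ∑ x ∈ S with pos x = q, c x • G (σ q) (σ (q - 1)) := by
        rw [← sum_fiberwise_of_maps_to hposR]
        exact sum_congr rfl fun q _ ↦ sum_congr rfl fun x hx ↦ by rw [(mem_filter.1 hx).2]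
    _ = _ := by simp_rw [sum_smul]

theorem exists_seqRhs_eq_stageRhs (a : ℕ → ℕ → ℕ → ℝ) {σ : ℕ → ℕ} {p : ℕ}
    (ha : a (σ p) (σ p) (σ p - 1) = 0 ∨ a (σ p) (σ p - 1) (σ p) = 0)
    (hp : StageComputable σ p) :
    ∃ (A : ℕ → ℝ) (Af : ℝ), (A p = 0 ∨ Af = 0) ∧
      ∀ (E : Type) [AddCommMonoid E] [Module ℝ E] (G : ℕ → ℕ → E),
        stageRhs a (σ p) G = seqRhs σ A Af p G := by
  set u := σ p with hu
  by_cases hu₁ : u ≤ 1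
  · exact ⟨0, 0, Or.inl rfl, fun E _ _ G ↦ by simp [stageRhs, seqRhs, hu₁]⟩
  obtain ⟨hprev, hdiag⟩ := hp (by omega)
  have hprod : ∀ x ∈ Icc 1 (u - 1) ×ˢ Icc 1 (u - 1), PairOccursBefore σ p x.1 x.2 :=
    fun x hx ↦ hprev _ (mem_product.1 hx).1 _ (mem_product.1 hx).2
  have hpR : p ∉ Icc 2 (p - 1) := by
    rw [mem_Icc]
    omega
  rcases hdiag with himplicit | ⟨hd₁, hd₂⟩
  · obtain ⟨β, hβ⟩ := exists_sum_pairs_eq_sum_consecutive (fun x ↦ a u x.1 x.2) hprod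
    refine ⟨Function.update β p (a u u (u - 1)), a u (u - 1) u, by simpa using ha,
      fun E _ _ G ↦ ?_⟩
    simp only [stageRhs, seqRhs, if_neg hu₁, ← hu, himplicit, Function.update_self,
      sum_update_smul_of_notMem hpR, ← sum_product', hβ]
  · set S := insert (u, u - 1) (insert (u - 1, u) (Icc 1 (u - 1) ×ˢ Icc 1 (u - 1)))
    have hS : ∀ x ∈ S, PairOccursBefore σ p x.1 x.2 := by
      simp only [S, forall_mem_insert]
      exact ⟨hd₁, hd₂, hprod⟩
    obtain ⟨β, hβ⟩ := exists_sum_pairs_eq_sum_consecutive (fun x ↦ a u x.1 x.2) hS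
    refine ⟨Function.update β p 0, 0, Or.inr rfl, fun E _ _ G ↦ ?_⟩
    have hsum : ∑ x ∈ S, a u x.1 x.2 • G x.1 x.2 = stageRhs a u G := by
      rw [sum_insert (by simp only [mem_insert, mem_product, mem_Icc, Prod.mk.injEq]; omega),
        sum_insert (by simp only [mem_product, mem_Icc]; omega), sum_product, stageRhs,
        if_neg hu₁, add_assoc]
    simp only [← hsum, seqRhs, hβ, Function.update_self, zero_smul, zero_add,
      sum_update_smul_of_notMem hpR]

def slotValue (j k : ℕ) : ℕ → ℕ
  | 0 | 2 => max (max j k - 1) 1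
  | 1 => max j k
  | 3 => k
  | _ => j

/-- Stage `5 * Nat.pair (j - 1) (k - 1) + r + 2`, for `r < 5`, is a copy of
`Y (slotValue j k r)`; stages `0` and `1` are copies of `Y 1 = y_n`. -/
def layout (p : ℕ) : ℕ :=
  if p < 2 then 1 else
    slotValue (((p - 2) / 5).unpair.1 + 1) (((p - 2) / 5).unpair.2 + 1) ((p - 2) % 5)

theorem layout_slot (a b : ℕ) {r : ℕ} (hr : r < 5) :
    layout (5 * Nat.pair a b + r + 2) = slotValue (a + 1) (b + 1) r := by
  have h₁ : (5 * Nat.pair a b + r + 2 - 2) / 5 = Nat.pair a b := by omega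
  have h₂ : (5 * Nat.pair a b + r + 2 - 2) % 5 = r := by omega
  rw [layout, if_neg (by omega), h₁, h₂, Nat.unpair_pair]

theorem layout_pred_slot (a b : ℕ) {r : ℕ} (hr : r < 5) (hr₀ : 1 ≤ r) :
    layout (5 * Nat.pair a b + r + 2 - 1) = slotValue (a + 1) (b + 1) (r - 1) := by
  rw [← layout_slot a b (by omega : r - 1 < 5)]
  congr 1
  omega

theorem exists_eq_slot {p : ℕ} (hp : 2 ≤ p) : ∃ a b r, r < 5 ∧ p = 5 * Nat.pair a b + r + 2 :=
  ⟨((p - 2) / 5).unpair.1, ((p - 2) / 5).unpair.2, (p - 2) % 5, Nat.mod_lt _ (by norm_num),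
    by rw [Nat.pair_unpair]; omega⟩

theorem slotValue_mem_Icc {j k : ℕ} (r : ℕ) (hj : 1 ≤ j) (hk : 1 ≤ k) :
    slotValue j k r ∈ Icc 1 (max j k) := by
  rw [mem_Icc]
  rcases r with _ | _ | _ | _ | r <;> simp only [slotValue] <;> omega

theorem layout_slot_last {j k : ℕ} (hj : 1 ≤ j) (hk : 1 ≤ k) :
    layout (5 * Nat.pair (j - 1) (k - 1) + 6) = j ∧
      layout (5 * Nat.pair (j - 1) (k - 1) + 6 - 1) = k := by
  rw [show 5 * Nat.pair (j - 1) (k - 1) + 6 = 5 * Nat.pair (j - 1) (k - 1) + 4 + 2 by rfl,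
    layout_slot _ _ (by norm_num), layout_pred_slot _ _ (by norm_num) (by norm_num)]
  simp only [slotValue]
  omega

theorem pairOccursBefore_layout {a b j k : ℕ} (r : ℕ) (hj : 1 ≤ j) (hk : 1 ≤ k)
    (h : max j k ≤ max a b) : PairOccursBefore layout (5 * Nat.pair a b + r + 2) j k :=
  have := Nat.pair_lt_pair_of_max_lt (a' := j - 1) (b' := k - 1) (a := a) (b := b) (by omega)
  ⟨_, mem_Icc.2 ⟨by omega, by omega⟩, layout_slot_last hj hk⟩

theorem layout_stageComputable (p : ℕ) : StageComputable layout p := by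
  intro hu
  have hp : 2 ≤ p := by
    by_contra hp
    rw [layout, if_pos (by omega)] at hu
    omega
  obtain ⟨a, b, r, hr, rfl⟩ := exists_eq_slot hp
  have hmem := mem_Icc.1 (slotValue_mem_Icc r (Nat.le_add_left 1 a) (Nat.le_add_left 1 b))
  rw [layout_slot a b hr] at hu ⊢
  refine ⟨fun j hj k hk ↦ pairOccursBefore_layout r (mem_Icc.1 hj).1 (mem_Icc.1 hk).1
    (by simp only [mem_Icc] at hj hk; omega), ?_⟩
  by_cases hlt : slotValue (a + 1) (b + 1) r ≤ max a b
  · exact Or.inr ⟨pairOccursBefore_layout r (by omega) (by omega) (by omega),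
      pairOccursBefore_layout r (by omega) (by omega) (by omega)⟩
  rcases r with _ | _ | _ | _ | _ | r
  · simp only [slotValue] at hlt
    omega
  · rw [layout_pred_slot a b hr le_rfl]
    simp only [slotValue] at hlt ⊢
    omega
  · simp only [slotValue] at hlt
    omega
  · rw [layout_pred_slot a b hr (by norm_num)]
    simp only [slotValue] at hlt ⊢
    omega
  · refine Or.inr ⟨⟨5 * Nat.pair a b + 1 + 2, mem_Icc.2 ⟨by omega, by omega⟩, ?_⟩,
      ⟨5 * Nat.pair a b + 2 + 2, mem_Icc.2 ⟨by omega, by omega⟩, ?_⟩⟩ <;>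
    rw [layout_slot a b (by norm_num), layout_pred_slot a b (by norm_num) (by norm_num)] <;>
    simp only [slotValue] at hlt ⊢ <;> omega
  · omega

theorem layout_mem_Icc {s p : ℕ} (hp : p ∈ Icc 2 (5 * s ^ 2 + 1)) : layout p ∈ Icc 1 s := by
  rw [mem_Icc] at hp
  obtain ⟨a, b, r, hr, rfl⟩ := exists_eq_slot hp.1
  have hab := Nat.pair_lt_sq_iff.1 (by omega : Nat.pair a b < s ^ 2)
  have := mem_Icc.1 (slotValue_mem_Icc r (Nat.le_add_left 1 a) (Nat.le_add_left 1 b))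
  rw [layout_slot a b hr, mem_Icc]
  omega

theorem exists_layout_eq_pair {s j k : ℕ} (hj : j ∈ Icc 1 s) (hk : k ∈ Icc 1 s) :
    ∃ q ∈ Icc 2 (5 * s ^ 2 + 1), layout q = j ∧ layout (q - 1) = k := by
  rw [mem_Icc] at hj hk
  have := Nat.pair_lt_sq_iff.2 (⟨by omega, by omega⟩ : j - 1 < s ∧ k - 1 < s)
  exact ⟨_, mem_Icc.2 ⟨by omega, by omega⟩, layout_slot_last hj.1 hk.1⟩

theorem eq_add_smul_stageRhs {E : Type*} [AddCommGroup E] [Module ℝ E] {s : ℕ}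
    {a : ℕ → ℕ → ℕ → ℝ} {F : E → E → E} {h : ℝ} {yn : E} {Y : ℕ → E} (hY1 : Y 1 = yn)
    (hY : ∀ i ∈ Icc 2 s, Y i = yn + h •
      (a i i (i - 1) • F (Y i) (Y (i - 1)) + a i (i - 1) i • F (Y (i - 1)) (Y i) +
        ∑ j ∈ Icc 1 (i - 1), ∑ k ∈ Icc 1 (i - 1), a i j k • F (Y j) (Y k)))
    {u : ℕ} (hu : u ∈ Icc 1 s) :
    Y u = yn + h • stageRhs a u fun j k ↦ F (Y j) (Y k) := by
  rw [mem_Icc] at hu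
  by_cases hu₁ : u ≤ 1
  · rw [stageRhs, if_pos hu₁, smul_zero, add_zero, show u = 1 by omega, hY1]
  · rw [stageRhs, if_neg hu₁]
    exact hY u (mem_Icc.2 ⟨by omega, hu.2⟩)

end NPRK

open NPRK

theorem nprk_expressible_as_sequentially_coupled_general
    (s : ℕ)
    (a : ℕ → ℕ → ℕ → ℝ) (b : ℕ → ℕ → ℝ)
    (ha4 : ∀ i ∈ Finset.Icc 1 s, a i i (i - 1) = 0 ∨ a i (i - 1) i = 0) :
    ∃ shat : ℕ, s ≤ shat ∧
    ∃ aseq : ℕ → ℕ → ℝ, ∃ aflip : ℕ → ℝ, ∃ bseq : ℕ → ℝ,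
      (∀ i ∈ Finset.Icc 2 shat, aseq i i = 0 ∨ aflip i = 0) ∧
      ∀ (d : ℕ) (F : (Fin d → ℝ) → (Fin d → ℝ) → (Fin d → ℝ)) (h : ℝ)
        (yn : Fin d → ℝ) (Y : ℕ → (Fin d → ℝ)),
        Y 1 = yn →
        (∀ i ∈ Finset.Icc 2 s, Y i = yn + h •
          (a i i (i - 1) • F (Y i) (Y (i - 1)) + a i (i - 1) i • F (Y (i - 1)) (Y i) +
            ∑ j ∈ Finset.Icc 1 (i - 1), ∑ k ∈ Finset.Icc 1 (i - 1),
              a i j k • F (Y j) (Y k))) →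
        ∃ Yt : ℕ → (Fin d → ℝ),
          Yt 1 = yn ∧
          (∀ i ∈ Finset.Icc 2 shat, Yt i = yn + h •
            (aseq i i • F (Yt i) (Yt (i - 1)) + aflip i • F (Yt (i - 1)) (Yt i) +
              ∑ j ∈ Finset.Icc 2 (i - 1), aseq i j • F (Yt j) (Yt (j - 1)))) ∧
          yn + h • ∑ i ∈ Finset.Icc 1 s, ∑ j ∈ Finset.Icc 1 s, b i j • F (Y i) (Y j) =
            yn + h • ∑ i ∈ Finset.Icc 2 shat, bseq i • F (Yt i) (Yt (i - 1)) := by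
  choose! A Af hA₀ hA using fun p (hp : p ∈ Icc 2 (5 * s ^ 2 + 1)) ↦
    exists_seqRhs_eq_stageRhs a (ha4 _ (layout_mem_Icc hp)) (layout_stageComputable p)
  obtain ⟨β, hβ⟩ := exists_sum_pairs_eq_sum_consecutive (R := Icc 2 (5 * s ^ 2 + 1))
    (S := Icc 1 s ×ˢ Icc 1 s) (fun x ↦ b x.1 x.2)
    fun x hx ↦ exists_layout_eq_pair (mem_product.1 hx).1 (mem_product.1 hx).2
  refine ⟨5 * s ^ 2 + 1, by nlinarith, A, Af, β, hA₀,
    fun d F h yn Y hY1 hY ↦ ⟨fun p ↦ Y (layout p), hY1, fun i hi ↦ ?_, ?_⟩⟩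
  · exact (eq_add_smul_stageRhs hY1 hY (layout_mem_Icc hi)).trans (by rw [hA i hi]; rfl)
  · rw [← sum_product' (f := fun i j ↦ b i j • F (Y i) (Y j)), hβ _ fun j k ↦ F (Y j) (Y k)]

/-- Every `s`-stage diagonally-implicit NPRK method of the form
(eq. nprk-general-imim-imex) can be expressed as an `ŝ`-stage sequentially-coupled NPRK
method (eq. nprk-simple-coupling-imim-imex) with `ŝ ≥ s`, producing the same output. -/
theorem nprk_expressible_as_sequentially_coupled
    (s : ℕ) (hs : 1 ≤ s)
    (a : ℕ → ℕ → ℕ → ℝ) (b : ℕ → ℕ → ℝ)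
    (ha1 : ∀ i ∈ Finset.Icc 1 s, ∀ j ∈ Finset.Icc 1 s, ∀ k ∈ Finset.Icc 1 s,
      (i < j ∨ i < k) → a i j k = 0)
    (ha2 : ∀ i ∈ Finset.Icc 1 s, ∀ k, k ≠ i - 1 → a i i k = 0)
    (ha3 : ∀ i ∈ Finset.Icc 1 s, ∀ j, j ≠ i - 1 → a i j i = 0)
    (ha4 : ∀ i ∈ Finset.Icc 1 s, a i i (i - 1) = 0 ∨ a i (i - 1) i = 0) :
    ∃ shat : ℕ, s ≤ shat ∧
    ∃ aseq : ℕ → ℕ → ℝ, ∃ aflip : ℕ → ℝ, ∃ bseq : ℕ → ℝ,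
      (∀ i ∈ Finset.Icc 2 shat, aseq i i = 0 ∨ aflip i = 0) ∧
      ∀ (d : ℕ) (F : (Fin d → ℝ) → (Fin d → ℝ) → (Fin d → ℝ)) (h : ℝ)
        (yn : Fin d → ℝ) (Y : ℕ → (Fin d → ℝ)),
        Y 1 = yn →
        (∀ i ∈ Finset.Icc 2 s, Y i = yn + h •
          (a i i (i - 1) • F (Y i) (Y (i - 1)) + a i (i - 1) i • F (Y (i - 1)) (Y i) +
            ∑ j ∈ Finset.Icc 1 (i - 1), ∑ k ∈ Finset.Icc 1 (i - 1),
              a i j k • F (Y j) (Y k))) →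
        ∃ Yt : ℕ → (Fin d → ℝ),
          Yt 1 = yn ∧
          (∀ i ∈ Finset.Icc 2 shat, Yt i = yn + h •
            (aseq i i • F (Yt i) (Yt (i - 1)) + aflip i • F (Yt (i - 1)) (Yt i) +
              ∑ j ∈ Finset.Icc 2 (i - 1), aseq i j • F (Yt j) (Yt (j - 1)))) ∧
          yn + h • ∑ i ∈ Finset.Icc 1 s, ∑ j ∈ Finset.Icc 1 s, b i j • F (Y i) (Y j) =
            yn + h • ∑ i ∈ Finset.Icc 2 shat, bseq i • F (Yt i) (Yt (i - 1)) :=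
  nprk_expressible_as_sequentially_coupled_general s a b ha4
end

section
/- Let s ≥ 2 and let (a_{i,j,j−1}) for 2 ≤ j ≤ i ≤ s and (b_{i,i−1}) for 2 ≤ i ≤ s be real coefficients of an s-stage sequentially-coupled NPRK method. Define PRK coefficients, for 1 ≤ i, j ≤ s − 1: a_{ij} := a_{i+1,j+1,j}, â_{ij} := a_{i,j+1,j}, and b_i = b̂_i := b_{i+1,i}. Then for every dimension d, every F : ℝ^d × ℝ^d → ℝ^d, every h ∈ ℝ, every y_n ∈ ℝ^d, and every tuple (Y₁, …, Y_s) with Y₁ = y_n and Y_i = y_n + h Σ_{j=2}^{i} a_{i,j,j−1}F(Y_j,Y_{j−1}) for i = 2,…,s, the values Z_i := Y_{i+1} and W_i := Y_i (for i = 1,…,s−1) satisfy the partitioned Runge–Kutta stage equations Z_i = y_n + h Σ_{j=1}^{s−1} a_{ij}F(Z_j,W_j) and W_i = y_n + h Σ_{j=1}^{s−1} â_{ij}F(Z_j,W_j) for the partitioned system z' = F(z,w), w' = F(z,w) with z_n = w_n = y_n, and the PRK output y_n + h Σ_{i=1}^{s−1} b_i F(Z_i,W_i) equals the NPRK output y_n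 + h Σ_{i=2}^{s} b_{i,i−1}F(Y_i,Y_{i−1}). -/
open Finset

section ReindexedSums

variable {M : Type*} [AddCommMonoid M]

theorem sum_Icc_one_pred_add_one (s : ℕ) (g : ℕ → M) :
    ∑ j ∈ Icc 1 (s - 1), g (j + 1) = ∑ j ∈ Icc 2 s, g j := by
  cases s with
  | zero => rfl
  | succ n => rw [Nat.add_sub_cancel, ← map_add_right_Icc 1 n 1, sum_map]; rfl

theorem sum_Icc_eq_sum_Icc_of_eq_zero_of_lt {m i s : ℕ} (g : ℕ → M) (his : i ≤ s)
    (hg : ∀ j, i < j → g j = 0) : ∑ j ∈ Icc m s, g j = ∑ j ∈ Icc m i, g j :=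
  (sum_subset (Icc_subset_Icc_right his) fun j hj hji =>
    hg j (by simp only [mem_Icc] at hj hji; omega)).symm

end ReindexedSums

/-- Row `i` of `a` vanishes beyond the diagonal, so the NPRK stage sum over `j ≤ i` extends to
all `s - 1` couplings `F (Y (j + 1)) (Y j)`, which is the shape of a PRK stage. -/
theorem eq_prk_stage_of_eq_nprk_stage {R M : Type*} [Semiring R] [AddCommMonoid M]
    [Module R M] {s i : ℕ} (his : i ≤ s) (a : ℕ → ℕ → R)
    (ha : ∀ j, i < j → a i j = 0) (F : M → M → M) (h : R) (yn : M) (Y : ℕ → M)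
    (hYi : Y i = yn + h • ∑ j ∈ Icc 2 i, a i j • F (Y j) (Y (j - 1))) :
    Y i = yn + h • ∑ j ∈ Icc 1 (s - 1), a i (j + 1) • F (Y (j + 1)) (Y j) := by
  have hsum := sum_Icc_one_pred_add_one s fun j => a i j • F (Y j) (Y (j - 1))
  simp only [Nat.add_sub_cancel] at hsum
  rw [hsum, sum_Icc_eq_sum_Icc_of_eq_zero_of_lt _ his fun j hj => by simp [ha j hj], hYi]

theorem sequentially_coupled_nprk_is_prk_general
    (s : ℕ)
    (a : ℕ → ℕ → ℝ) (b : ℕ → ℝ)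
    (ha0 : ∀ i j : ℕ, i < j → a i j = 0)
    (d : ℕ) (F : (Fin d → ℝ) → (Fin d → ℝ) → (Fin d → ℝ)) (h : ℝ)
    (yn : Fin d → ℝ) (Y : ℕ → (Fin d → ℝ))
    (hY1 : Y 1 = yn)
    (hY : ∀ i ∈ Finset.Icc 2 s,
      Y i = yn + h • ∑ j ∈ Finset.Icc 2 i, a i j • F (Y j) (Y (j - 1))) :
    (∀ i ∈ Finset.Icc 1 (s - 1), Y (i + 1) = yn + h •
      ∑ j ∈ Finset.Icc 1 (s - 1), a (i + 1) (j + 1) • F (Y (j + 1)) (Y j)) ∧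
    (∀ i ∈ Finset.Icc 1 (s - 1), Y i = yn + h •
      ∑ j ∈ Finset.Icc 1 (s - 1), a i (j + 1) • F (Y (j + 1)) (Y j)) ∧
    (yn + h • ∑ i ∈ Finset.Icc 1 (s - 1), b (i + 1) • F (Y (i + 1)) (Y i) =
      yn + h • ∑ i ∈ Finset.Icc 2 s, b i • F (Y i) (Y (i - 1))) := by
  have nprk_stage : ∀ i ∈ Icc 1 s,
      Y i = yn + h • ∑ j ∈ Icc 2 i, a i j • F (Y j) (Y (j - 1)) := by
    intro i hi
    rcases (mem_Icc.1 hi).1.eq_or_lt with rfl | hi2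
    · simp [hY1]
    · exact hY i (mem_Icc.2 ⟨hi2, (mem_Icc.1 hi).2⟩)
  have stage : ∀ i ∈ Icc 1 s,
      Y i = yn + h • ∑ j ∈ Icc 1 (s - 1), a i (j + 1) • F (Y (j + 1)) (Y j) := fun i hi =>
    eq_prk_stage_of_eq_nprk_stage (mem_Icc.1 hi).2 a (ha0 i) F h yn Y (nprk_stage i hi)
  refine ⟨fun i hi => stage (i + 1) ?_, fun i hi => stage i ?_, ?_⟩
  · simp only [mem_Icc] at hi ⊢; omega
  · simp only [mem_Icc] at hi ⊢; omega
  · simpa using congrArg (yn + h • ·)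
      (sum_Icc_one_pred_add_one s fun i => b i • F (Y i) (Y (i - 1)))

/-- An `s`-stage sequentially-coupled NPRK method can be expressed as an
`(s−1)`-stage partitioned Runge–Kutta method with coefficients
`a_{ij} = a_{i+1,j+1,j}`, `â_{ij} = a_{i,j+1,j}`, `b_i = b̂_i = b_{i+1,i}` applied to
the partitioned system `z' = F(z,w)`, `w' = F(z,w)` with `z_n = w_n = y_n`, via
`Z_i = Y_{i+1}`, `W_i = Y_i`, and both methods produce the same output. -/
theorem sequentially_coupled_nprk_is_prk
    (s : ℕ) (hs : 2 ≤ s)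
    (a : ℕ → ℕ → ℝ) (b : ℕ → ℝ)
    (ha0 : ∀ i j : ℕ, i < j → a i j = 0)
    (d : ℕ) (F : (Fin d → ℝ) → (Fin d → ℝ) → (Fin d → ℝ)) (h : ℝ)
    (yn : Fin d → ℝ) (Y : ℕ → (Fin d → ℝ))
    (hY1 : Y 1 = yn)
    (hY : ∀ i ∈ Finset.Icc 2 s,
      Y i = yn + h • ∑ j ∈ Finset.Icc 2 i, a i j • F (Y j) (Y (j - 1))) :
    (∀ i ∈ Finset.Icc 1 (s - 1), Y (i + 1) = yn + h •
      ∑ j ∈ Finset.Icc 1 (s - 1), a (i + 1) (j + 1) • F (Y (j + 1)) (Y j)) ∧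
    (∀ i ∈ Finset.Icc 1 (s - 1), Y i = yn + h •
      ∑ j ∈ Finset.Icc 1 (s - 1), a i (j + 1) • F (Y (j + 1)) (Y j)) ∧
    (yn + h • ∑ i ∈ Finset.Icc 1 (s - 1), b (i + 1) • F (Y (i + 1)) (Y i) =
      yn + h • ∑ i ∈ Finset.Icc 2 s, b i • F (Y i) (Y (i - 1))) :=
  sequentially_coupled_nprk_is_prk_general s a b ha0 d F h yn Y hY1 hY
end

section
/- Let s ≥ 1, let (a_{ijk}) for 1 ≤ i,j,k ≤ s and (b_{ij}) for 1 ≤ i,j ≤ s be real coefficients, let d ∈ ℕ, G¹, G² : ℝ^d → ℝ^d, h ∈ ℝ, and y_n ∈ ℝ^d, and define F(u,v) := G¹(u) + G²(v). Define a¹_{ij} := Σ_k a_{ijk}, b¹_i := Σ_j b_{ij}, a²_{ik} := Σ_j a_{ijk}, and b²_j := Σ_i b_{ij}. Then a tuple (Y₁,…,Y_s) satisfies the NPRK stage equations Y_i = y_n + h Σ_{j,k} a_{ijk}F(Y_j,Y_k) if and only if it satisfies the additive Runge–Kutta stage equations Y_i = y_n + h Σ_j [a¹_{ij}G¹(Y_j)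 + a²_{ij}G²(Y_j)]; and in that case the NPRK output y_n + h Σ_{i,j} b_{ij}F(Y_i,Y_j) equals the ARK output y_n + h Σ_i [b¹_i G¹(Y_i) + b²_i G²(Y_i)]. That is, on additively partitioned right-hand sides an NPRK method reduces to its underlying ARK method with shared abscissae. -/
theorem Finset.sum_sum_smul_add {ι R M : Type*} [Semiring R] [AddCommMonoid M] [Module R M]
    (S : Finset ι) (c : ι → ι → R) (P Q : ι → M) :
    ∑ j ∈ S, ∑ k ∈ S, c j k • (P j + Q k) =
      ∑ j ∈ S, ((∑ k ∈ S, c j k) • P j + (∑ k ∈ S, c k j) • Q j) := by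
  simp only [smul_add, Finset.sum_add_distrib, Finset.sum_smul]
  rw [Finset.sum_comm (f := fun j k => c j k • Q k)]

theorem nprk_reduces_to_ark_on_additive_partition_general
    (s : ℕ)
    (a : ℕ → ℕ → ℕ → ℝ) (b : ℕ → ℕ → ℝ)
    (d : ℕ) (G₁ G₂ : (Fin d → ℝ) → (Fin d → ℝ)) (h : ℝ) (yn : Fin d → ℝ)
    (Y : ℕ → (Fin d → ℝ)) :
    ((∀ i ∈ Finset.Icc 1 s, Y i = yn + h • ∑ j ∈ Finset.Icc 1 s,
        ∑ k ∈ Finset.Icc 1 s, a i j k • (fun u v => G₁ u + G₂ v) (Y j) (Y k)) ↔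
      (∀ i ∈ Finset.Icc 1 s, Y i = yn + h • ∑ j ∈ Finset.Icc 1 s,
        ((∑ k ∈ Finset.Icc 1 s, a i j k) • G₁ (Y j) +
          (∑ k ∈ Finset.Icc 1 s, a i k j) • G₂ (Y j)))) ∧
    ((∀ i ∈ Finset.Icc 1 s, Y i = yn + h • ∑ j ∈ Finset.Icc 1 s,
        ∑ k ∈ Finset.Icc 1 s, a i j k • (fun u v => G₁ u + G₂ v) (Y j) (Y k)) →
      yn + h • ∑ i ∈ Finset.Icc 1 s, ∑ j ∈ Finset.Icc 1 s,
          b i j • (fun u v => G₁ u + G₂ v) (Y i) (Y j) =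
        yn + h • ∑ i ∈ Finset.Icc 1 s,
          ((∑ j ∈ Finset.Icc 1 s, b i j) • G₁ (Y i) +
            (∑ j ∈ Finset.Icc 1 s, b j i) • G₂ (Y i))) :=
  ⟨forall₂_congr fun i _ => by
      rw [Finset.sum_sum_smul_add _ (a i) (fun j => G₁ (Y j)) (fun k => G₂ (Y k))],
    fun _ => by rw [Finset.sum_sum_smul_add _ b (fun i => G₁ (Y i)) (fun j => G₂ (Y j))]⟩

/-- On an additively partitioned right-hand side `F(u,v) = G¹(u) + G²(v)`, an NPRK
method reduces to its underlying additive Runge–Kutta method with coefficients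
`a¹_{ij} = Σ_k a_{ijk}`, `b¹_i = Σ_j b_{ij}`, `a²_{ik} = Σ_j a_{ijk}`,
`b²_j = Σ_i b_{ij}`: the stage equations are equivalent and the outputs agree. -/
theorem nprk_reduces_to_ark_on_additive_partition
    (s : ℕ) (hs : 1 ≤ s)
    (a : ℕ → ℕ → ℕ → ℝ) (b : ℕ → ℕ → ℝ)
    (d : ℕ) (G₁ G₂ : (Fin d → ℝ) → (Fin d → ℝ)) (h : ℝ) (yn : Fin d → ℝ)
    (Y : ℕ → (Fin d → ℝ)) :
    ((∀ i ∈ Finset.Icc 1 s, Y i = yn + h • ∑ j ∈ Finset.Icc 1 s,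
        ∑ k ∈ Finset.Icc 1 s, a i j k • (fun u v => G₁ u + G₂ v) (Y j) (Y k)) ↔
      (∀ i ∈ Finset.Icc 1 s, Y i = yn + h • ∑ j ∈ Finset.Icc 1 s,
        ((∑ k ∈ Finset.Icc 1 s, a i j k) • G₁ (Y j) +
          (∑ k ∈ Finset.Icc 1 s, a i k j) • G₂ (Y j)))) ∧
    ((∀ i ∈ Finset.Icc 1 s, Y i = yn + h • ∑ j ∈ Finset.Icc 1 s,
        ∑ k ∈ Finset.Icc 1 s, a i j k • (fun u v => G₁ u + G₂ v) (Y j) (Y k)) →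
      yn + h • ∑ i ∈ Finset.Icc 1 s, ∑ j ∈ Finset.Icc 1 s,
          b i j • (fun u v => G₁ u + G₂ v) (Y i) (Y j) =
        yn + h • ∑ i ∈ Finset.Icc 1 s,
          ((∑ j ∈ Finset.Icc 1 s, b i j) • G₁ (Y i) +
            (∑ j ∈ Finset.Icc 1 s, b j i) • G₂ (Y i))) :=
  nprk_reduces_to_ark_on_additive_partition_general s a b d G₁ G₂ h yn Y
end
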